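/- Let Γ be a finitely generated group. Then the functor A ↦ Hom_Grp(Γ, Aˣ) on the category of unital real Banach algebras (morphisms: continuous unital algebra homomorphisms) is pro-representable by a countable inverse system: there exists an inverse sequence R₁ ← R₂ ← R₃ ← ⋯ of unital real Banach algebras with continuous unital algebra homomorphisms as transition maps, together with bijections Hom_Grp(Γ, Aˣ) ≅ colim_{n∈ℕ} Hom_{BanAlg_ℝ}(R_n, A), natural in the unital real Banach algebra A. -/

import Mathlib

/-- Unital real Banach algebras, with continuous unital algebra homomorphisms. -/
structure BanAlg : Type 1 where
  carrier : Type
  [isNormedRing : NormedRing carrier]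
  [isNormedAlgebra : NormedAlgebra ℝ carrier]
  [isCompleteSpace : CompleteSpace carrier]

attribute [instance] BanAlg.isNormedRing BanAlg.isNormedAlgebra BanAlg.isCompleteSpace

instance : CoeSort BanAlg Type := ⟨BanAlg.carrier⟩

/-!
A representation `ρ : Γ →* Aˣ` of a group generated by a finite set `S` satisfies
`‖ρ γ‖ ≤ ‖1‖ * M ^ |γ|`, where `M` bounds `‖ρ s‖` on `S` and `|γ|` is the word length. So as soon
as `n + 1 ≥ M`, the algebra map `ℝ[Γ] → A` induced by `ρ` is bounded for the weighted `ℓ¹` norm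
`‖∑ λ_γ γ‖ = ∑ |λ_γ| (n + 1) ^ |γ|` and extends to the completion `R n`. This extension is unique
because `ℝ[Γ]` is dense in `R n`, and the identity of `ℝ[Γ]` induces the transition maps.
-/

open scoped Pointwise

noncomputable section

namespace UniformSpace.Completion

-- Mathlib only provides this instance for commutative `A`.
instance {𝕜 A : Type*} [NormedField 𝕜] [SeminormedRing A] [NormedAlgebra 𝕜 A] :
    NormedAlgebra 𝕜 (Completion A) where
  norm_smul_le := norm_smul_le

variable {R α β : Type*} [CommSemiring R]
  [Ring α] [UniformSpace α] [IsUniformAddGroup α] [IsTopologicalRing α] [Algebra R α]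
  [UniformContinuousConstSMul R α]

variable (R α) in
def coeAlgHom : α →ₐ[R] Completion α where
  __ := coeRingHom
  commutes' _ := rfl

theorem algHom_ext [Semiring β] [Algebra R β] [TopologicalSpace β] [T2Space β]
    {φ ψ : Completion α →ₐ[R] β} (hφ : Continuous φ) (hψ : Continuous ψ)
    (h : φ.comp (coeAlgHom R α) = ψ.comp (coeAlgHom R α)) : φ = ψ :=
  DFunLike.coe_injective (Completion.ext hφ hψ fun a => DFunLike.congr_fun h a)

variable [Ring β] [UniformSpace β] [IsUniformAddGroup β] [IsTopologicalRing β] [Algebra R β]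
  [CompleteSpace β] [T0Space β]

def extensionAlgHom (f : α →ₐ[R] β) (hf : Continuous f) : Completion α →ₐ[R] β where
  __ := extensionHom (f : α →+* β) hf
  commutes' r := (extensionHom_coe (f : α →+* β) hf _).trans (f.commutes r)

theorem extensionAlgHom_coe (f : α →ₐ[R] β) (hf : Continuous f) (a : α) :
    extensionAlgHom f hf a = f a :=
  extensionHom_coe (f : α →+* β) hf a

theorem continuous_extensionAlgHom (f : α →ₐ[R] β) (hf : Continuous f) :
    Continuous (extensionAlgHom f hf) :=
  continuous_extension

end UniformSpace.Completion

section WordLength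

variable {M : Type*} [Monoid M] {S : Set M}

theorem exists_mem_pow_of_mem_closure {g : M} (hg : g ∈ Submonoid.closure S) :
    ∃ k : ℕ, g ∈ S ^ k := by
  induction hg using Submonoid.closure_induction with
  | mem s hs => exact ⟨1, by rwa [pow_one]⟩
  | one => exact ⟨0, Set.mem_one.mpr rfl⟩
  | mul g h _ _ hg hh =>
    obtain ⟨k, hk⟩ := hg
    obtain ⟨l, hl⟩ := hh
    exact ⟨k + l, pow_add S k l ▸ Set.mul_mem_mul hk hl⟩

-- This is `0` (the infimum of `∅`) for `g` outside the submonoid generated by `S`.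
variable (S) in
def wordLength (g : M) : ℕ := sInf {k | g ∈ S ^ k}

theorem wordLength_le {g : M} {k : ℕ} (hg : g ∈ S ^ k) : wordLength S g ≤ k :=
  Nat.sInf_le hg

theorem mem_pow_wordLength (hS : Submonoid.closure S = ⊤) (g : M) : g ∈ S ^ wordLength S g :=
  Nat.sInf_mem (exists_mem_pow_of_mem_closure (hS ▸ Submonoid.mem_top g))

theorem wordLength_mul_le (hS : Submonoid.closure S = ⊤) (g h : M) :
    wordLength S (g * h) ≤ wordLength S g + wordLength S h :=
  wordLength_le <| pow_add S _ _ ▸ Set.mul_mem_mul (mem_pow_wordLength hS g)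
    (mem_pow_wordLength hS h)

theorem norm_map_le_of_mem_pow {A : Type*} [SeminormedRing A] (ρ : M →* A) {r : ℝ}
    (hρ : ∀ s ∈ S, ‖ρ s‖ ≤ r) {k : ℕ} {g : M} (hg : g ∈ S ^ k) : ‖ρ g‖ ≤ ‖(1 : A)‖ * r ^ k := by
  induction k generalizing g with
  | zero => simp [Set.mem_one.mp hg]
  | succ k ih =>
    obtain ⟨a, ha, s, hs, rfl⟩ := Set.mem_mul.mp (pow_succ S k ▸ hg)
    have hr : 0 ≤ r := (norm_nonneg _).trans (hρ s hs)
    calc ‖ρ (a * s)‖ ≤ ‖ρ a‖ * ‖ρ s‖ := map_mul ρ a s ▸ norm_mul_le _ _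
      _ ≤ ‖(1 : A)‖ * r ^ k * r := by gcongr; exacts [ih ha, hρ s hs]
      _ = ‖(1 : A)‖ * r ^ (k + 1) := by ring

end WordLength

structure MonoidWeight (M : Type*) [Monoid M] where
  toFun : M → ℝ
  pos : ∀ g, 0 < toFun g
  map_mul_le : ∀ g h, toFun (g * h) ≤ toFun g * toFun h

instance {M : Type*} [Monoid M] : CoeFun (MonoidWeight M) fun _ => M → ℝ :=
  ⟨MonoidWeight.toFun⟩

variable {M : Type*} [Monoid M]

namespace MonoidAlgebra

variable (w : MonoidWeight M)

def weightedNorm (x : MonoidAlgebra ℝ M) : ℝ := x.coeff.sum fun g a => |a| * w g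

variable {w}

theorem weightedNorm_eq_sum (x : MonoidAlgebra ℝ M) {s : Finset M} (hs : x.coeff.support ⊆ s) :
    weightedNorm w x = ∑ g ∈ s, |x.coeff g| * w g :=
  Finsupp.sum_of_support_subset _ hs _ fun g _ => by rw [abs_zero, zero_mul]

theorem weightedNorm_zero : weightedNorm w 0 = 0 := Finsupp.sum_zero_index

theorem weightedNorm_add_le (x y : MonoidAlgebra ℝ M) :
    weightedNorm w (x + y) ≤ weightedNorm w x + weightedNorm w y := by
  classical
  rw [weightedNorm_eq_sum (x + y) (Finsupp.support_add (g₁ := x.coeff) (g₂ := y.coeff)),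
    weightedNorm_eq_sum x Finset.subset_union_left,
    weightedNorm_eq_sum y Finset.subset_union_right, ← Finset.sum_add_distrib]
  gcongr with g
  rw [← add_mul]
  exact mul_le_mul_of_nonneg_right (abs_add_le _ _) (w.pos g).le

theorem weightedNorm_sum_le {ι : Type*} {s : Finset ι} {f : ι → MonoidAlgebra ℝ M} :
    weightedNorm w (∑ i ∈ s, f i) ≤ ∑ i ∈ s, weightedNorm w (f i) :=
  Finset.le_sum_of_subadditive _ weightedNorm_zero.le weightedNorm_add_le s f

theorem weightedNorm_neg (x : MonoidAlgebra ℝ M) : weightedNorm w (-x) = weightedNorm w x := by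
  rw [weightedNorm_eq_sum (-x) (Finsupp.support_neg x.coeff).le, weightedNorm]
  exact Finset.sum_congr rfl fun g _ => by rw [coeff_neg, Finsupp.neg_apply, abs_neg]

theorem weightedNorm_smul (r : ℝ) (x : MonoidAlgebra ℝ M) :
    weightedNorm w (r • x) = |r| * weightedNorm w x := by
  rw [weightedNorm_eq_sum (r • x) (Finsupp.support_smul (b := r) (g := x.coeff)), weightedNorm,
    Finsupp.sum, Finset.mul_sum]
  exact Finset.sum_congr rfl fun g _ => by
    rw [coeff_smul, Finsupp.smul_apply, smul_eq_mul, abs_mul, mul_assoc]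

theorem weightedNorm_single (g : M) (a : ℝ) : weightedNorm w (single g a) = |a| * w g := by
  rw [weightedNorm_eq_sum (single g a) Finsupp.support_single_subset, Finset.sum_singleton,
    coeff_single, Finsupp.single_eq_same]

theorem abs_coeff_mul_le_weightedNorm (x : MonoidAlgebra ℝ M) (g : M) :
    |x.coeff g| * w g ≤ weightedNorm w x := by
  classical
  rw [weightedNorm_eq_sum x (Finset.subset_insert g x.coeff.support)]
  exact Finset.single_le_sum (f := fun h => |x.coeff h| * w h)
    (fun h _ => by positivity [w.pos h]) (Finset.mem_insert_self g _)

theorem eq_zero_of_weightedNorm_eq_zero {x : MonoidAlgebra ℝ M} (hx : weightedNorm w x = 0) :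
    x = 0 :=
  coeff_injective <| Finsupp.ext fun g => abs_eq_zero.mp <| le_antisymm
    (nonpos_of_mul_nonpos_left (hx ▸ abs_coeff_mul_le_weightedNorm x g) (w.pos g)) (abs_nonneg _)

theorem weightedNorm_mul_le (x y : MonoidAlgebra ℝ M) :
    weightedNorm w (x * y) ≤ weightedNorm w x * weightedNorm w y := by
  calc weightedNorm w (x * y)
      ≤ ∑ a ∈ x.coeff.support, ∑ b ∈ y.coeff.support,
          weightedNorm w (single (a * b) (x.coeff a * y.coeff b)) := by
        rw [mul_def]
        exact weightedNorm_sum_le.trans (Finset.sum_le_sum fun a _ => weightedNorm_sum_le)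
    _ ≤ ∑ a ∈ x.coeff.support, ∑ b ∈ y.coeff.support,
          (|x.coeff a| * w a) * (|y.coeff b| * w b) := by
        gcongr with a _ b _
        rw [weightedNorm_single, abs_mul, mul_mul_mul_comm]
        exact mul_le_mul_of_nonneg_left (w.map_mul_le a b) (by positivity)
    _ = weightedNorm w x * weightedNorm w y := (Finset.sum_mul_sum _ _ _ _).symm

theorem norm_lift_le_weightedNorm {A : Type*} [SeminormedRing A] [NormedAlgebra ℝ A]
    (ρ : M →* A) {C : ℝ} (hρ : ∀ g, ‖ρ g‖ ≤ C * w g) (x : MonoidAlgebra ℝ M) :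
    ‖lift ℝ A M ρ x‖ ≤ C * weightedNorm w x := by
  rw [lift_apply, Finsupp.sum, weightedNorm, Finsupp.sum, Finset.mul_sum]
  refine (norm_sum_le _ _).trans (Finset.sum_le_sum fun g _ => ?_)
  rw [norm_smul, Real.norm_eq_abs, mul_left_comm]
  exact mul_le_mul_of_nonneg_left (hρ g) (abs_nonneg _)

end MonoidAlgebra

-- A type synonym, so that the weighted norm is not an instance on `MonoidAlgebra ℝ M`.
def WeightedMonoidAlgebra (_w : MonoidWeight M) : Type _ := MonoidAlgebra ℝ M

namespace WeightedMonoidAlgebra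

variable {w : MonoidWeight M}

instance : Ring (WeightedMonoidAlgebra w) := inferInstanceAs (Ring (MonoidAlgebra ℝ M))

instance : Algebra ℝ (WeightedMonoidAlgebra w) :=
  inferInstanceAs (Algebra ℝ (MonoidAlgebra ℝ M))

instance : NormedAddCommGroup (WeightedMonoidAlgebra w) :=
  AddGroupNorm.toNormedAddCommGroup
    { toFun := MonoidAlgebra.weightedNorm w
      map_zero' := MonoidAlgebra.weightedNorm_zero
      add_le' := MonoidAlgebra.weightedNorm_add_le
      neg' := MonoidAlgebra.weightedNorm_neg
      eq_zero_of_map_eq_zero' := fun _ => MonoidAlgebra.eq_zero_of_weightedNorm_eq_zero }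

instance : NormedRing (WeightedMonoidAlgebra w) where
  __ : NormedAddCommGroup (WeightedMonoidAlgebra w) := inferInstance
  __ : Ring (WeightedMonoidAlgebra w) := inferInstance
  norm_mul_le := MonoidAlgebra.weightedNorm_mul_le

instance : NormedAlgebra ℝ (WeightedMonoidAlgebra w) where
  norm_smul_le r x := (MonoidAlgebra.weightedNorm_smul r x).le

variable (w) in
def of : M →* WeightedMonoidAlgebra w := MonoidAlgebra.of ℝ M

theorem norm_of (g : M) : ‖of w g‖ = w g :=
  (MonoidAlgebra.weightedNorm_single g 1).trans (by rw [abs_one, one_mul])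

theorem algHom_ext {B : Type*} [Semiring B] [Algebra ℝ B] {φ ψ : WeightedMonoidAlgebra w →ₐ[ℝ] B}
    (h : ∀ g, φ (of w g) = ψ (of w g)) : φ = ψ :=
  MonoidAlgebra.algHom_ext h (Subsingleton.elim _ _)

variable {A : Type*} [SeminormedRing A] [NormedAlgebra ℝ A]

def lift (ρ : M →* A) : WeightedMonoidAlgebra w →ₐ[ℝ] A := MonoidAlgebra.lift ℝ A M ρ

theorem lift_of (ρ : M →* A) (g : M) : lift ρ (of w g) = ρ g := MonoidAlgebra.lift_of ρ g

theorem continuous_lift (ρ : M →* A) {C : ℝ} (hρ : ∀ g, ‖ρ g‖ ≤ C * w g) :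
    Continuous (lift (w := w) ρ) :=
  AddMonoidHomClass.continuous_of_bound _ C (MonoidAlgebra.norm_lift_le_weightedNorm ρ hρ)

end WeightedMonoidAlgebra

abbrev BeurlingAlgebra (w : MonoidWeight M) : Type _ :=
  UniformSpace.Completion (WeightedMonoidAlgebra w)

namespace BeurlingAlgebra

open UniformSpace

variable {w w' : MonoidWeight M}

variable (w) in
def of : M →* BeurlingAlgebra w :=
  (Completion.coeRingHom : WeightedMonoidAlgebra w →+* _).toMonoidHom.comp
    (WeightedMonoidAlgebra.of w)

theorem norm_of (g : M) : ‖of w g‖ = w g :=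
  (Completion.norm_coe _).trans (WeightedMonoidAlgebra.norm_of g)

theorem algHom_ext {B : Type*} [Semiring B] [Algebra ℝ B] [TopologicalSpace B] [T2Space B]
    {φ ψ : BeurlingAlgebra w →ₐ[ℝ] B} (hφ : Continuous φ) (hψ : Continuous ψ)
    (h : ∀ g, φ (of w g) = ψ (of w g)) : φ = ψ :=
  Completion.algHom_ext hφ hψ (WeightedMonoidAlgebra.algHom_ext h)

variable {A : Type*} [NormedRing A] [NormedAlgebra ℝ A] [CompleteSpace A]

def lift (ρ : M →* A) {C : ℝ} (hρ : ∀ g, ‖ρ g‖ ≤ C * w g) : BeurlingAlgebra w →ₐ[ℝ] A :=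
  Completion.extensionAlgHom _ (WeightedMonoidAlgebra.continuous_lift ρ hρ)

theorem lift_of (ρ : M →* A) {C : ℝ} (hρ : ∀ g, ‖ρ g‖ ≤ C * w g) (g : M) :
    lift ρ hρ (of w g) = ρ g :=
  (Completion.extensionAlgHom_coe _ _ _).trans (WeightedMonoidAlgebra.lift_of ρ g)

theorem continuous_lift (ρ : M →* A) {C : ℝ} (hρ : ∀ g, ‖ρ g‖ ≤ C * w g) :
    Continuous (lift ρ hρ) :=
  Completion.continuous_extensionAlgHom _ _

def inclusion (h : ∀ g, w g ≤ w' g) : BeurlingAlgebra w' →ₐ[ℝ] BeurlingAlgebra w :=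
  lift (of w) (C := 1) fun g => by rw [norm_of, one_mul]; exact h g

theorem inclusion_of (h : ∀ g, w g ≤ w' g) (g : M) : inclusion h (of w' g) = of w g :=
  lift_of _ _ g

theorem continuous_inclusion (h : ∀ g, w g ≤ w' g) : Continuous (inclusion h) :=
  continuous_lift _ _

theorem inclusion_self (h : ∀ g, w g ≤ w g) : inclusion h = AlgHom.id ℝ _ :=
  algHom_ext (continuous_inclusion h) continuous_id (inclusion_of h)

theorem inclusion_comp_inclusion {w'' : MonoidWeight M} (h : ∀ g, w g ≤ w' g)
    (h' : ∀ g, w' g ≤ w'' g) :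
    (inclusion h).comp (inclusion h') = inclusion fun g => (h g).trans (h' g) :=
  algHom_ext ((continuous_inclusion h).comp (continuous_inclusion h'))
    (continuous_inclusion _) fun g => by simp only [AlgHom.comp_apply, inclusion_of]

end BeurlingAlgebra

section WordWeight

variable {S : Set M} {r r' : ℝ}

def wordWeight (hS : Submonoid.closure S = ⊤) (hr : 1 ≤ r) : MonoidWeight M where
  toFun g := r ^ wordLength S g
  pos _ := pow_pos (zero_lt_one.trans_le hr) _
  map_mul_le g h := (pow_le_pow_right₀ hr (wordLength_mul_le hS g h)).trans_eq (pow_add r _ _)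

theorem wordWeight_mono (hS : Submonoid.closure S = ⊤) (hr : 1 ≤ r) (hr' : 1 ≤ r') (h : r ≤ r')
    (g : M) : wordWeight hS hr g ≤ wordWeight hS hr' g :=
  pow_le_pow_left₀ (zero_le_one.trans hr) h _

theorem norm_map_le_wordWeight {A : Type*} [SeminormedRing A] (hS : Submonoid.closure S = ⊤)
    (hr : 1 ≤ r) (ρ : M →* A) (hρ : ∀ s ∈ S, ‖ρ s‖ ≤ r) (g : M) :
    ‖ρ g‖ ≤ ‖(1 : A)‖ * wordWeight hS hr g :=
  norm_map_le_of_mem_pow ρ hρ (mem_pow_wordLength hS g)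

end WordWeight

end

/-- Let `Γ` be a finitely generated group.  Then the functor `A ↦ Hom_Grp(Γ, Aˣ)` on
unital real Banach algebras is pro-representable by a countable inverse system: there
are an inverse sequence `R₀ ← R₁ ← R₂ ← ⋯` of unital real Banach algebras (with
continuous unital algebra homomorphisms `T m n : R n → R m` for `m ≤ n`, compatible
with the one-step transition maps and with `T n n = id`) and, for every unital real
Banach algebra `A`, canonical maps `c A n : Hom_{BanAlg}(R n, A) → Hom_Grp(Γ, Aˣ)`
that are compatible with the transition maps and natural in `A`, and which exhibit
`Hom_Grp(Γ, Aˣ)` as the colimit of the sequence `Hom_{BanAlg}(R n, A)`: the maps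
`c A n` are jointly surjective, and two elements with the same image are identified
after composing with some transition map. -/
theorem finitelyGeneratedGroup_banach_proRepresentable
    (Γ : Type) [Group Γ] (hΓ : Group.FG Γ) :
    ∃ (R : ℕ → BanAlg)
      (T : ∀ m n : ℕ, m ≤ n → {g : (R n : Type) →ₐ[ℝ] (R m : Type) // Continuous g})
      (c : ∀ (A : BanAlg) (n : ℕ),
        {f : (R n : Type) →ₐ[ℝ] (A : Type) // Continuous f} → (Γ →* (A : Type)ˣ)),
      -- `T` is a transitive system of transition maps
      (∀ n : ℕ, (T n n le_rfl).1 = AlgHom.id ℝ (R n : Type)) ∧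
      (∀ (l m n : ℕ) (hlm : l ≤ m) (hmn : m ≤ n),
        (T l n (hlm.trans hmn)).1 = ((T l m hlm).1).comp (T m n hmn).1) ∧
      -- the maps `c` are compatible with the transition maps
      (∀ (A : BanAlg) (m n : ℕ) (h : m ≤ n)
        (f : {f : (R m : Type) →ₐ[ℝ] (A : Type) // Continuous f}),
        c A n ⟨f.1.comp (T m n h).1, f.2.comp (T m n h).2⟩ = c A m f) ∧
      -- naturality in `A`
      (∀ (A B : BanAlg) (φ : {g : (A : Type) →ₐ[ℝ] (B : Type) // Continuous g})
        (n : ℕ) (f : {f : (R n : Type) →ₐ[ℝ] (A : Type) // Continuous f}),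
        c B n ⟨φ.1.comp f.1, φ.2.comp f.2⟩ =
          (Units.map (φ.1 : (A : Type) →* (B : Type))).comp (c A n f)) ∧
      -- the induced map `colim_n Hom(R n, A) → Hom_Grp(Γ, Aˣ)` is surjective …
      (∀ (A : BanAlg) (ρ : Γ →* (A : Type)ˣ),
        ∃ (n : ℕ) (f : {f : (R n : Type) →ₐ[ℝ] (A : Type) // Continuous f}),
          c A n f = ρ) ∧
      -- … and injective
      (∀ (A : BanAlg) (m n : ℕ)
        (f : {f : (R m : Type) →ₐ[ℝ] (A : Type) // Continuous f})
        (g : {g : (R n : Type) →ₐ[ℝ] (A : Type) // Continuous g}),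
        c A m f = c A n g →
        ∃ (N : ℕ) (hm : m ≤ N) (hn : n ≤ N),
          f.1.comp (T m N hm).1 = g.1.comp (T n N hn).1) := by
  obtain ⟨S, hS⟩ := (Group.fg_iff_monoid_fg.mp hΓ).fg_top
  have hr (n : ℕ) : (1 : ℝ) ≤ n + 1 := le_add_of_nonneg_left n.cast_nonneg
  let w (n : ℕ) : MonoidWeight Γ := wordWeight hS (hr n)
  have hw {m n : ℕ} (h : m ≤ n) (γ : Γ) : w m γ ≤ w n γ :=
    wordWeight_mono hS _ _ (by gcongr) γ
  open BeurlingAlgebra in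
  refine ⟨fun n => ⟨BeurlingAlgebra (w n)⟩,
    fun m n h => ⟨inclusion (hw h), BeurlingAlgebra.continuous_inclusion _⟩,
    fun A n f => ((f.1 : _ →* A).comp (of (w n))).toHomUnits, ?_, ?_, ?_, ?_, ?_, ?_⟩ <;> dsimp only
  · exact fun n => inclusion_self _
  · exact fun l m n hlm hmn => (inclusion_comp_inclusion _ _).symm
  · exact fun A m n h f => MonoidHom.ext fun γ => Units.ext (congrArg f.1 (inclusion_of (hw h) γ))
  · exact fun A B φ n f => MonoidHom.ext fun γ => Units.ext rfl
  · intro A ρ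
    obtain ⟨n, hn⟩ := exists_nat_ge (∑ s ∈ S, ‖(ρ s : A)‖)
    have hρS : ∀ s ∈ S, ‖(ρ s : A)‖ ≤ n + 1 := fun s hs => by
      linarith [Finset.single_le_sum (f := fun s => ‖(ρ s : A)‖) (fun _ _ => norm_nonneg _) hs]
    have hρ := norm_map_le_wordWeight hS (hr n) ((Units.coeHom A).comp ρ) hρS
    exact ⟨n, ⟨lift _ hρ, continuous_lift _ _⟩, MonoidHom.ext fun γ => Units.ext (lift_of _ hρ γ)⟩
  · intro A m n f g hfg
    refine ⟨max m n, le_max_left m n, le_max_right m n, algHom_ext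
      (f.2.comp (BeurlingAlgebra.continuous_inclusion (hw (le_max_left m n))))
      (g.2.comp (BeurlingAlgebra.continuous_inclusion (hw (le_max_right m n)))) fun γ => ?_⟩
    have hfγ : f.1 (of (w m) γ) = g.1 (of (w n) γ) := congrArg Units.val (DFunLike.congr_fun hfg γ)
    simpa only [AlgHom.comp_apply, inclusion_of] using hfγ
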